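/- Existence of an optimal stationary (controlled-predictor) policy: let β ∈ (0,1), c : 𝕏×𝕌 → ℝ, and let J*_β be the unique fixed point of the Bellman operator T of the predictor MDP. Then there exists a Borel measurable map γ* : P(𝕏) → 𝒬×ℋ, γ*(π) = (Q*(π), η*(π)), that attains the minimum in the discounted cost optimality equation for every π: J*_β(π) = c̃(π, Q*(π), η*(π)) + β Σ_{q ∈ ℳ : π(Q*(π)⁻¹(q)) > 0} J*_β(F(π, Q*(π), η*(π), q)) · π(Q*(π)⁻¹(q)). Moreover, J*_β is the unique bounded fixed point of the policy-evaluation operator T_{γ*} defined by (T_{γ*} f)(π) := c̃(π,γ*(π)) + β Σ_{q : π(Q*(π)⁻¹(q))>0} f(F(π,γ*(π),q)) π(Q*(π)⁻¹(q)); i.e., the stationary policy γ* achieves the optimal discounted cost. -/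
import Mathlib


open Finset

noncomputable section

variable {X U M : Type}

/-- `π` is a probability mass function on the finite set `X`. -/
def IsPmf [Fintype X] (π : X → ℝ) : Prop :=
  (∀ x, 0 ≤ π x) ∧ ∑ x, π x = 1

/-- Mass that `π` assigns to the cell `Q⁻¹(q)`. -/
def mass [Fintype X] [DecidableEq M] (π : X → ℝ) (Q : X → M) (q : M) : ℝ :=
  ∑ x ∈ Finset.univ.filter (fun x => Q x = q), π x

/-- One-step predictor (Bayesian) update `F(π,Q,η,q)`. -/
def Fupd [Fintype X] [DecidableEq M] (P : X → U → X → ℝ)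
    (π : X → ℝ) (Q : X → M) (η : (X → M) → M → U) (q : M) : X → ℝ :=
  fun x' => (mass π Q q)⁻¹ *
    ∑ x ∈ Finset.univ.filter (fun x => Q x = q), P x (η Q q) x' * π x

/-- The equivalent per-stage cost `c̃(π,Q,η) := Σ_x π(x) c(x, η(Q, Q(x)))`. -/
def ctilde [Fintype X] (c : X → U → ℝ) (π : X → ℝ) (Q : X → M)
    (η : (X → M) → M → U) : ℝ :=
  ∑ x, π x * c x (η Q (Q x))

/-- The Bellman operator of the predictor MDP:
`(Tf)(π) := min_{(Q,η)} [ c̃(π,Q,η) + β Σ_{q : π(Q⁻¹(q)) > 0} f(F(π,Q,η,q)) π(Q⁻¹(q)) ]`. -/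
def bellman [Fintype X] [Fintype U] [Fintype M]
    [Nonempty X] [Nonempty U] [Nonempty M] [DecidableEq X] [DecidableEq M]
    (P : X → U → X → ℝ) (c : X → U → ℝ) (β : ℝ)
    (f : (X → ℝ) → ℝ) (π : X → ℝ) : ℝ :=
  Finset.univ.inf' Finset.univ_nonempty
    (fun Qη : (X → M) × ((X → M) → M → U) =>
      ctilde c π Qη.1 Qη.2 +
        β * ∑ q : M,
          (if 0 < mass π Qη.1 q then f (Fupd P π Qη.1 Qη.2 q) * mass π Qη.1 q else 0))

/-! ### Auxiliary lemmas -/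

lemma mass_nonneg' [Fintype X] [DecidableEq M] (π : X → ℝ) (hπ : ∀ x, 0 ≤ π x)
    (Q : X → M) (q : M) : 0 ≤ mass π Q q :=
  Finset.sum_nonneg fun x _ => hπ x

lemma sum_mass' [Fintype X] [Fintype M] [DecidableEq M] (π : X → ℝ) (Q : X → M) :
    ∑ q : M, mass π Q q = ∑ x, π x :=
  Finset.sum_fiberwise _ _ _

lemma Fupd_isPmf [Fintype X] [DecidableEq M] (P : X → U → X → ℝ)
    (hP : ∀ x u, IsPmf (P x u)) {π : X → ℝ} (hπ : IsPmf π)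
    (Q : X → M) (η : (X → M) → M → U) (q : M)
    (hq : 0 < mass π Q q) : IsPmf (Fupd P π Q η q) := by
  constructor
  · intro x'
    exact mul_nonneg (inv_nonneg.2 hq.le)
      (Finset.sum_nonneg fun x _ => mul_nonneg ((hP x _).1 x') (hπ.1 x))
  · unfold Fupd
    rw [← Finset.mul_sum, Finset.sum_comm]
    have h : ∀ x ∈ Finset.univ.filter (fun x => Q x = q),
        (∑ x' : X, P x (η Q q) x' * π x) = π x := by
      intro x _
      rw [← Finset.sum_mul, (hP x _).2, one_mul]
    rw [Finset.sum_congr rfl h]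
    exact inv_mul_cancel₀ (ne_of_gt hq)

lemma continuous_mass' [Fintype X] [DecidableEq M] (Q : X → M) (q : M) :
    Continuous fun π : X → ℝ => mass π Q q :=
  continuous_finset_sum _ fun x _ => continuous_apply x

/-- The quantity minimized in the Bellman operator, as a function of `(π, a)`. -/
def gval [Fintype X] [Fintype M] [DecidableEq M]
    (P : X → U → X → ℝ) (c : X → U → ℝ) (β : ℝ) (J : (X → ℝ) → ℝ)
    (π : X → ℝ) (a : (X → M) × ((X → M) → M → U)) : ℝ :=
  ctilde c π a.1 a.2 +
    β * ∑ q : M,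
      (if 0 < mass π a.1 q then J (Fupd P π a.1 a.2 q) * mass π a.1 q else 0)

lemma measurable_gval [Fintype X] [Fintype M] [DecidableEq M]
    (P : X → U → X → ℝ) (hP : ∀ x u, IsPmf (P x u)) (c : X → U → ℝ) (β : ℝ)
    (J : (X → ℝ) → ℝ) (hJc : ContinuousOn J {π : X → ℝ | IsPmf π})
    (b : (X → M) × ((X → M) → M → U)) :
    Measurable fun π : {π : X → ℝ | IsPmf π} => gval P c β J (↑π) b := by
  classical
  unfold gval
  apply Measurable.add
  · have hc : Continuous fun π : X → ℝ => ctilde c π b.1 b.2 :=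
      continuous_finset_sum _ fun x _ => (continuous_apply x).mul continuous_const
    exact (hc.comp continuous_subtype_val).measurable
  · apply Measurable.const_mul
    apply Finset.measurable_sum
    intro q _
    set sq : Set {π : X → ℝ | IsPmf π} := {π | 0 < mass (↑π : X → ℝ) b.1 q} with hsq
    have hsqm : MeasurableSet sq :=
      measurableSet_lt measurable_const
        (((continuous_mass' b.1 q).comp continuous_subtype_val).measurable)
    apply measurable_of_measurable_union_cover sq sqᶜ hsqm hsqm.compl
      (fun x _ => by by_cases h : x ∈ sq; exacts [Or.inl h, Or.inr h])
    · have hmc : Continuous fun a : sq => mass (↑↑a : X → ℝ) b.1 q :=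
        (continuous_mass' b.1 q).comp (continuous_subtype_val.comp continuous_subtype_val)
      have hFc : Continuous fun a : sq => Fupd P (↑↑a : X → ℝ) b.1 b.2 q := by
        apply continuous_pi
        intro x'
        simp only [Fupd]
        exact (hmc.inv₀ fun a => ne_of_gt a.2).mul
          (continuous_finset_sum _ fun x _ => continuous_const.mul
            ((continuous_apply x).comp (continuous_subtype_val.comp continuous_subtype_val)))
      have hJF : Continuous fun a : sq => J (Fupd P (↑↑a : X → ℝ) b.1 b.2 q) :=
        hJc.comp_continuous hFc fun a => Fupd_isPmf P hP a.1.2 b.1 b.2 q a.2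
      have heq : (fun a : sq =>
          (if 0 < mass (↑↑a : X → ℝ) b.1 q then
            J (Fupd P (↑↑a : X → ℝ) b.1 b.2 q) * mass (↑↑a : X → ℝ) b.1 q else 0))
          = fun a : sq => J (Fupd P (↑↑a : X → ℝ) b.1 b.2 q) * mass (↑↑a : X → ℝ) b.1 q :=
        funext fun a => if_pos a.2
      have : Measurable fun a : sq =>
          (if 0 < mass (↑↑a : X → ℝ) b.1 q then
            J (Fupd P (↑↑a : X → ℝ) b.1 b.2 q) * mass (↑↑a : X → ℝ) b.1 q else 0) := by
        rw [heq]; exact (hJF.mul hmc).measurable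
      exact this
    · have heq : (fun a : (sqᶜ : Set _) =>
          (if 0 < mass (↑↑a : X → ℝ) b.1 q then
            J (Fupd P (↑↑a : X → ℝ) b.1 b.2 q) * mass (↑↑a : X → ℝ) b.1 q else 0))
          = fun _ => (0 : ℝ) :=
        funext fun a => if_neg a.2
      have : Measurable fun a : (sqᶜ : Set _) =>
          (if 0 < mass (↑↑a : X → ℝ) b.1 q then
            J (Fupd P (↑↑a : X → ℝ) b.1 b.2 q) * mass (↑↑a : X → ℝ) b.1 q else 0) := by
        rw [heq]; exact measurable_const
      exact this

/-- Existence of an optimal stationary (controlled-predictor) policy: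
for `β ∈ (0,1)` and `J*_β` the unique fixed point of the Bellman operator `T` of the
predictor MDP, there exists a Borel measurable map `γ* : P(𝕏) → 𝒬×ℋ` attaining the
minimum in the discounted cost optimality equation at every `π`; moreover `J*_β` is the
unique bounded fixed point of the policy-evaluation operator `T_{γ*}`, i.e. the
stationary policy `γ*` achieves the optimal discounted cost. -/
theorem exists_optimal_stationary_policy
    [Fintype X] [Fintype U] [Fintype M]
    [Nonempty X] [Nonempty U] [Nonempty M] [DecidableEq X] [DecidableEq M]
    (P : X → U → X → ℝ) (hP : ∀ x u, IsPmf (P x u)) (c : X → U → ℝ)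
    (β : ℝ) (hβ0 : 0 < β) (hβ1 : β < 1)
    (J : (X → ℝ) → ℝ)
    (hJc : ContinuousOn J {π : X → ℝ | IsPmf π})
    (hJb : ∃ C : ℝ, ∀ π : X → ℝ, IsPmf π → |J π| ≤ C)
    (hJfix : ∀ π : X → ℝ, IsPmf π → J π = bellman (M := M) P c β J π) :
    ∃ γ : (X → ℝ) → ((X → M) × ((X → M) → M → U)),
      -- Borel measurability (the action space being finite/discrete)
      (∀ a : (X → M) × ((X → M) → M → U), MeasurableSet {π : X → ℝ | γ π = a})
      -- γ attains the minimum in the DCOE at every π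
      ∧ (∀ π : X → ℝ, IsPmf π →
          J π = ctilde c π (γ π).1 (γ π).2 +
            β * ∑ q : M,
              (if 0 < mass π (γ π).1 q then
                J (Fupd P π (γ π).1 (γ π).2 q) * mass π (γ π).1 q else 0))
      -- J is the unique bounded fixed point of the policy-evaluation operator T_γ
      ∧ (∀ K : (X → ℝ) → ℝ,
          (∃ C : ℝ, ∀ π : X → ℝ, IsPmf π → |K π| ≤ C) →
          (∀ π : X → ℝ, IsPmf π →
            K π = ctilde c π (γ π).1 (γ π).2 +
              β * ∑ q : M,
                (if 0 < mass π (γ π).1 q then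
                  K (Fupd P π (γ π).1 (γ π).2 q) * mass π (γ π).1 q else 0)) →
          ∀ π : X → ℝ, IsPmf π → K π = J π) := by
  classical
  obtain ⟨CJ, hCJ⟩ := hJb
  set S : Set (X → ℝ) := {π | IsPmf π} with hSdef
  have hSclosed : IsClosed S := by
    have hset : S = (⋂ x : X, {π : X → ℝ | 0 ≤ π x}) ∩ {π : X → ℝ | ∑ x, π x = 1} := by
      ext π
      simp [hSdef, IsPmf, Set.mem_iInter]
    rw [hset]
    exact (isClosed_iInter fun x =>
        isClosed_le continuous_const (continuous_apply x)).inter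
      (isClosed_eq (continuous_finset_sum _ fun x _ => continuous_apply x) continuous_const)
  have hSmeas : MeasurableSet S := hSclosed.measurableSet
  -- notation for the minimized quantity
  have hbell : ∀ π : X → ℝ, bellman (M := M) P c β J π
      = Finset.univ.inf' Finset.univ_nonempty (gval P c β J π) := fun _ => rfl
  -- the argmin selector
  let n := Fintype.card ((X → M) × ((X → M) → M → U))
  let e : ((X → M) × ((X → M) → M → U)) ≃ Fin n :=
    Fintype.equivFin _
  let p : (X → ℝ) → Fin n → Prop := fun π i =>
    ∀ b : (X → M) × ((X → M) → M → U), gval P c β J π (e.symm i) ≤ gval P c β J π b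
  have hpne : ∀ π : X → ℝ, (Finset.univ.filter (p π)).Nonempty := by
    intro π
    obtain ⟨a, -, ha⟩ := Finset.exists_min_image Finset.univ (gval (M := M) P c β J π)
      Finset.univ_nonempty
    refine ⟨e a, Finset.mem_filter.2 ⟨Finset.mem_univ _, ?_⟩⟩
    simp only [p, Equiv.symm_apply_apply]
    exact fun b => ha b (Finset.mem_univ b)
  let idx : (X → ℝ) → Fin n := fun π => (Finset.univ.filter (p π)).min' (hpne π)
  let a0 : (X → M) × ((X → M) → M → U) := Classical.arbitrary ((X → M) × ((X → M) → M → U))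
  let γ : (X → ℝ) → ((X → M) × ((X → M) → M → U)) := fun π =>
    if IsPmf π then e.symm (idx π) else a0
  have hγopt : ∀ π : X → ℝ, IsPmf π →
      ∀ b : (X → M) × ((X → M) → M → U), gval P c β J π (γ π) ≤ gval P c β J π b := by
    intro π hπ b
    have hm := Finset.min'_mem (Finset.univ.filter (p π)) (hpne π)
    have hp := (Finset.mem_filter.1 hm).2
    simpa [γ, if_pos hπ] using hp b
  have hkey : ∀ π : X → ℝ, IsPmf π → J π = gval P c β J π (γ π) := by
    intro π hπ
    rw [hJfix π hπ, hbell]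
    obtain ⟨b, -, hb⟩ := Finset.exists_mem_eq_inf' Finset.univ_nonempty (gval (M := M) P c β J π)
    refine le_antisymm (Finset.inf'_le _ (Finset.mem_univ _)) ?_
    rw [hb]
    exact hγopt π hπ b
  -- characterization of the selector
  have hsel : ∀ π : X → ℝ, ∀ a : (X → M) × ((X → M) → M → U),
      (e.symm (idx π) = a ↔ p π (e a) ∧ ∀ j : Fin n, j < e a → ¬ p π j) := by
    intro π a
    constructor
    · intro h
      have hidx : idx π = e a := by rw [← h, Equiv.apply_symm_apply]
      have hmem := Finset.min'_mem (Finset.univ.filter (p π)) (hpne π)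
      rw [show (Finset.univ.filter (p π)).min' (hpne π) = idx π from rfl, hidx] at hmem
      refine ⟨(Finset.mem_filter.1 hmem).2, fun j hj hpj => ?_⟩
      have hle : idx π ≤ j :=
        Finset.min'_le _ j (Finset.mem_filter.2 ⟨Finset.mem_univ _, hpj⟩)
      rw [hidx] at hle
      exact absurd hj (not_lt.2 hle)
    · rintro ⟨hpa, hlt⟩
      have hmem : e a ∈ Finset.univ.filter (p π) :=
        Finset.mem_filter.2 ⟨Finset.mem_univ _, hpa⟩
      have h1 : idx π ≤ e a := Finset.min'_le _ _ hmem
      have h2 : ¬ idx π < e a := fun h =>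
        hlt _ h (Finset.mem_filter.1 (Finset.min'_mem _ (hpne π))).2
      have h3 : idx π = e a := le_antisymm h1 (not_lt.1 h2)
      rw [h3, Equiv.symm_apply_apply]
  -- measurability of sublevel comparisons
  have hle : ∀ b1 b2 : (X → M) × ((X → M) → M → U),
      MeasurableSet ({π : X → ℝ | gval P c β J π b1 ≤ gval P c β J π b2} ∩ S) := by
    intro b1 b2
    have himg : {π : X → ℝ | gval P c β J π b1 ≤ gval P c β J π b2} ∩ S =
        Subtype.val '' {a : S | gval P c β J (↑a) b1 ≤ gval P c β J (↑a) b2} := by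
      ext π
      constructor
      · rintro ⟨h1, h2⟩
        exact ⟨⟨π, h2⟩, h1, rfl⟩
      · rintro ⟨x, hx, rfl⟩
        exact ⟨hx, x.2⟩
    rw [himg]
    exact hSmeas.subtype_image
      (measurableSet_le (measurable_gval P hP c β J hJc b1) (measurable_gval P hP c β J hJc b2))
  have hMi : ∀ i : Fin n, MeasurableSet ({π : X → ℝ | p π i} ∩ S) := by
    intro i
    have hset : {π : X → ℝ | p π i} ∩ S =
        ⋂ b : (X → M) × ((X → M) → M → U),
          ({π : X → ℝ | gval P c β J π (e.symm i) ≤ gval P c β J π b} ∩ S) := by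
      ext π
      simp only [Set.mem_inter_iff, Set.mem_setOf_eq, Set.mem_iInter]
      constructor
      · rintro ⟨hp, hS⟩ b
        exact ⟨hp b, hS⟩
      · intro h
        exact ⟨fun b => (h b).1, (h a0).2⟩
    rw [hset]
    exact MeasurableSet.iInter fun b => hle _ _
  refine ⟨γ, ?_, ?_, ?_⟩
  · -- measurability of {π | γ π = a}
    intro a
    have hset : {π : X → ℝ | γ π = a} =
        (({π : X → ℝ | p π (e a)} ∩ S) ∩
          ⋂ j : Fin n, (if j < e a then ({π : X → ℝ | p π j} ∩ S)ᶜ ∪ Sᶜ else Set.univ))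
        ∪ (Sᶜ ∩ {π : X → ℝ | a0 = a}) := by
      ext π
      by_cases hπ : IsPmf π
      · have hπS : π ∈ S := hπ
        simp only [Set.mem_union, Set.mem_inter_iff, Set.mem_setOf_eq, Set.mem_iInter,
          Set.mem_compl_iff, Set.mem_univ]
        have hγ : γ π = e.symm (idx π) := if_pos hπ
        constructor
        · intro h
          rw [hγ] at h
          obtain ⟨hpa, hlt⟩ := (hsel π a).1 h
          refine Or.inl ⟨⟨hpa, hπS⟩, fun j => ?_⟩
          by_cases hj : j < e a
          · simp only [if_pos hj, Set.mem_union, Set.mem_compl_iff, Set.mem_inter_iff,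
              Set.mem_setOf_eq]
            exact Or.inl fun hc => hlt j hj hc.1
          · simp [if_neg hj]
        · rintro (⟨⟨hpa, -⟩, hj⟩ | ⟨hnS, -⟩)
          · rw [hγ]
            refine (hsel π a).2 ⟨hpa, fun j hjlt hpj => ?_⟩
            have := hj j
            rw [if_pos hjlt] at this
            rcases this with h | h
            · exact h ⟨hpj, hπS⟩
            · exact h hπS
          · exact absurd hπS hnS
      · have hπS : π ∉ S := hπ
        have hγ : γ π = a0 := if_neg hπ
        simp only [Set.mem_union, Set.mem_inter_iff, Set.mem_setOf_eq, Set.mem_iInter,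
          Set.mem_compl_iff, hγ]
        constructor
        · intro h
          exact Or.inr ⟨hπS, h⟩
        · rintro (⟨⟨-, hS⟩, -⟩ | ⟨-, h⟩)
          · exact absurd hS hπS
          · exact h
    rw [hset]
    refine MeasurableSet.union ?_ ?_
    · refine ((hMi (e a)).inter (MeasurableSet.iInter fun j => ?_))
      by_cases hj : j < e a
      · rw [if_pos hj]
        exact ((hMi j).compl.union hSmeas.compl)
      · rw [if_neg hj]
        exact MeasurableSet.univ
    · refine hSmeas.compl.inter ?_
      by_cases h : a0 = a
      · have huniv : {π : X → ℝ | a0 = a} = Set.univ := by ext π; simp [h]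
        rw [huniv]; exact MeasurableSet.univ
      · have : {π : X → ℝ | a0 = a} = (∅ : Set (X → ℝ)) := by ext π; simp [h]
        rw [this]
        exact MeasurableSet.empty
  · -- optimality
    intro π hπ
    exact hkey π hπ
  · -- uniqueness of the bounded fixed point
    rintro K ⟨CK, hCK⟩ hKfix π hπ
    set D := |CK| + |CJ| with hD
    have hD0 : 0 ≤ D := add_nonneg (abs_nonneg _) (abs_nonneg _)
    have hiter : ∀ nn : ℕ, ∀ π : X → ℝ, IsPmf π → |K π - J π| ≤ β ^ nn * D := by
      intro nn
      induction nn with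
      | zero =>
        intro π hπ
        have h1 : |K π - J π| ≤ |K π| + |J π| := by
          simpa [sub_eq_add_neg] using abs_add_le (K π) (-(J π))
        have h2 : |K π| + |J π| ≤ D := by
          rw [hD]
          exact add_le_add ((hCK π hπ).trans (le_abs_self _))
            ((hCJ π hπ).trans (le_abs_self _))
        simpa using h1.trans h2
      | succ nn ih =>
        intro π hπ
        have hK := hKfix π hπ
        have hJ' := hkey π hπ
        simp only [gval] at hJ'
        have hsub : K π - J π = β * ∑ q : M,
            (if 0 < mass π (γ π).1 q then
              (K (Fupd P π (γ π).1 (γ π).2 q) - J (Fupd P π (γ π).1 (γ π).2 q))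
                * mass π (γ π).1 q else 0) := by
          rw [hK, hJ']
          have hq : ∀ q : M, (if 0 < mass π (γ π).1 q then
              (K (Fupd P π (γ π).1 (γ π).2 q) - J (Fupd P π (γ π).1 (γ π).2 q))
                * mass π (γ π).1 q else 0)
              = (if 0 < mass π (γ π).1 q then
                  K (Fupd P π (γ π).1 (γ π).2 q) * mass π (γ π).1 q else 0)
                - (if 0 < mass π (γ π).1 q then
                  J (Fupd P π (γ π).1 (γ π).2 q) * mass π (γ π).1 q else 0) := by
            intro q
            by_cases h : 0 < mass π (γ π).1 q <;> simp [h, sub_mul]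
          rw [Finset.sum_congr rfl fun q _ => hq q, Finset.sum_sub_distrib, mul_sub]
          ring
        rw [hsub, abs_mul, abs_of_pos hβ0]
        have hb : |∑ q : M, (if 0 < mass π (γ π).1 q then
            (K (Fupd P π (γ π).1 (γ π).2 q) - J (Fupd P π (γ π).1 (γ π).2 q))
              * mass π (γ π).1 q else 0)|
            ≤ ∑ q : M, β ^ nn * D * mass π (γ π).1 q := by
          refine (Finset.abs_sum_le_sum_abs _ _).trans (Finset.sum_le_sum fun q _ => ?_)
          by_cases h : 0 < mass π (γ π).1 q
          · rw [if_pos h, abs_mul, abs_of_pos h]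
            exact mul_le_mul_of_nonneg_right
              (ih _ (Fupd_isPmf P hP hπ (γ π).1 (γ π).2 q h)) h.le
          · rw [if_neg h, abs_zero]
            exact mul_nonneg (mul_nonneg (pow_nonneg hβ0.le nn) hD0)
              (mass_nonneg' π hπ.1 (γ π).1 q)
        calc β * |∑ q : M, (if 0 < mass π (γ π).1 q then
              (K (Fupd P π (γ π).1 (γ π).2 q) - J (Fupd P π (γ π).1 (γ π).2 q))
                * mass π (γ π).1 q else 0)|
            ≤ β * ∑ q : M, β ^ nn * D * mass π (γ π).1 q :=
              mul_le_mul_of_nonneg_left hb hβ0.le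
          _ = β * (β ^ nn * D * ∑ q : M, mass π (γ π).1 q) := by
              rw [← Finset.mul_sum]
          _ = β ^ (nn + 1) * D := by
              rw [sum_mass', hπ.2, pow_succ]; ring
    have hten : Filter.Tendsto (fun nn : ℕ => β ^ nn * D) Filter.atTop (nhds 0) := by
      simpa using (tendsto_pow_atTop_nhds_zero_of_lt_one hβ0.le hβ1).mul_const D
    have h0 : |K π - J π| ≤ 0 := ge_of_tendsto' hten fun nn => hiter nn π hπ
    have := le_antisymm h0 (abs_nonneg _)
    exact sub_eq_zero.1 (abs_eq_zero.1 this)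

end
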